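/- arXiv:1006.5172 — 3 statements merged into one kernel-verified Lean document; each statement's English description precedes it below -/
import Mathlib

section
/- Let (ξ_g(m)) and (η_h(m)) be the rational-valued arrays defined as follows: for integers g ≥ 0 and m ≥ 0 with m+1 ≥ 3g, ξ_g(m) = (2m)! / (12^g · g! · m! · (m+1−3g)!); η_0(m) = 0 for all m; and for every integer h ≥ 1 and every integer m ≥ 3h−1, η_h(m) is determined by the recurrence (2h−1)·η_h(m) = 4·C(m+4−3h, 3)·η_{h−1}(m) + 3·C(m+4−3h, 3)·ξ_{h−1}(m), where C(·,·) is the binomial coefficient. Then for every integer h ≥ 1 and every integer m ≥ 3h−1 one has η_h(m) = c_h · (2m)! / (6^h · m! · (m+1−3h)!), where c_h = 3 · 2^{3h−2} · (h!/(2h)!) · Σ_{l=0}^{h−1} C(2l, l) · 16^{−l}. -/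
open Nat Finset

/-- Theorem 5 + Corollary 5 of "Counting unicellular maps on non-orientable
surfaces" (Bernardi–Chapuy): if `ξ g m` is the number of orientable precubic
unicellular maps of genus `g` with `2m+1` edges and `η h m` satisfies the
recurrence of Theorem 5 (with `η 0 m = 0`), then `η h m` has the closed form
`c_h · (2m)! / (6^h · m! · (m+1-3h)!)`. -/
theorem number_of_nonorientable_precubic_unicellular_maps_integer_type
    (ξ η : ℕ → ℕ → ℚ)
    (hξ : ∀ g m : ℕ, 3 * g ≤ m + 1 →
      ξ g m = ((2 * m)! : ℚ) / ((12 : ℚ) ^ g * (g ! : ℚ) * (m ! : ℚ) * ((m + 1 - 3 * g)! : ℚ)))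
    (hη0 : ∀ m : ℕ, η 0 m = 0)
    (hηrec : ∀ h m : ℕ, 1 ≤ h → 3 * h - 1 ≤ m →
      (2 * (h : ℚ) - 1) * η h m =
        4 * ((m + 4 - 3 * h).choose 3 : ℚ) * η (h - 1) m +
        3 * ((m + 4 - 3 * h).choose 3 : ℚ) * ξ (h - 1) m) :
    ∀ h m : ℕ, 1 ≤ h → 3 * h - 1 ≤ m →
      η h m =
        (3 * (2 : ℚ) ^ (3 * h - 2) * ((h ! : ℚ) / ((2 * h)! : ℚ)) *
            ∑ l ∈ Finset.range h, ((2 * l).choose l : ℚ) / (16 : ℚ) ^ l) *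
          ((2 * m)! : ℚ) / ((6 : ℚ) ^ h * (m ! : ℚ) * ((m + 1 - 3 * h)! : ℚ)) := by
  have key : ∀ h m : ℕ, 3 * h ≤ m + 1 →
      η h m = (3 * (2 : ℚ) ^ (3 * h) / 4 * ((h ! : ℚ) / ((2 * h)! : ℚ)) *
            ∑ l ∈ Finset.range h, ((2 * l).choose l : ℚ) / (16 : ℚ) ^ l) *
          ((2 * m)! : ℚ) / ((6 : ℚ) ^ h * (m ! : ℚ) * ((m + 1 - 3 * h)! : ℚ)) := by
    intro h
    induction h with
    | zero => intro m _; simp [hη0]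
    | succ h ih =>
      intro m hm
      obtain ⟨k, rfl⟩ : ∃ k, m = k + 3 * h + 2 := ⟨m - (3 * h + 2), by omega⟩
      have hrec := hηrec (h + 1) (k + 3 * h + 2) (by omega) (by omega)
      have e1 : k + 3 * h + 2 + 4 - 3 * (h + 1) = k + 3 := by omega
      have e2 : k + 3 * h + 2 + 1 - 3 * h = k + 3 := by omega
      have e3 : k + 3 * h + 2 + 1 - 3 * (h + 1) = k := by omega
      have e4 : h + 1 - 1 = h := by omega
      rw [e1, e4] at hrec
      have hξh := hξ h (k + 3 * h + 2) (by omega)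
      rw [e2] at hξh
      have ihm := ih (k + 3 * h + 2) (by omega)
      rw [e2] at ihm
      rw [e3]
      have h2 : (2 * ((h + 1 : ℕ) : ℚ) - 1) ≠ 0 := by
        push_cast; intro hc; nlinarith [hc]
      apply mul_left_cancel₀ h2
      rw [hrec, ihm, hξh]
      -- choose identity
      have hch : ((k + 3).choose 3 : ℚ) = ((k + 3)! : ℚ) / (6 * (k ! : ℚ)) := by
        have := Nat.choose_mul_factorial_mul_factorial (show 3 ≤ k + 3 by omega)
        have e : k + 3 - 3 = k := by omega
        rw [e] at this
        have : ((k + 3).choose 3 * 3 ! * k ! : ℕ) = ((k + 3)! : ℕ) := this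
        have hq : ((k + 3).choose 3 : ℚ) * 6 * (k ! : ℚ) = ((k + 3)! : ℚ) := by
          exact_mod_cast congrArg (Nat.cast : ℕ → ℚ) this
        field_simp at hq ⊢
        linarith [hq]
      -- central binomial
      have hcb : (((2 * h).choose h : ℚ)) = ((2 * h)! : ℚ) / ((h ! : ℚ) * (h ! : ℚ)) := by
        have := Nat.choose_mul_factorial_mul_factorial (show h ≤ 2 * h by omega)
        have e : 2 * h - h = h := by omega
        rw [e] at this
        have hq : (((2 * h).choose h : ℚ)) * (h ! : ℚ) * (h ! : ℚ) = ((2 * h)! : ℚ) := by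
          exact_mod_cast congrArg (Nat.cast : ℕ → ℚ) this
        field_simp
        linarith [hq]
      rw [Finset.sum_range_succ, hch, hcb]
      -- factorial expansions
      have f1 : (((h + 1) ! : ℕ) : ℚ) = ((h : ℚ) + 1) * (h ! : ℚ) := by
        push_cast [Nat.factorial_succ]; ring
      have f2 : (((2 * (h + 1)) !  : ℕ) : ℚ) = (2 * (h : ℚ) + 2) * (2 * (h : ℚ) + 1) * ((2 * h)! : ℚ) := by
        have e : 2 * (h + 1) = 2 * h + 1 + 1 := by omega
        rw [e, Nat.factorial_succ, Nat.factorial_succ]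
        push_cast; ring
      rw [f1, f2]
      -- power expansions
      have p1 : (2 : ℚ) ^ (3 * (h + 1)) = ((2 : ℚ) ^ h) ^ 3 * 8 := by
        have e : 3 * (h + 1) = h * 3 + 3 := by omega
        rw [e, pow_add, pow_mul]; norm_num
      have p2 : (2 : ℚ) ^ (3 * h) = ((2 : ℚ) ^ h) ^ 3 := by
        rw [mul_comm, pow_mul]
      have p3 : (6 : ℚ) ^ (h + 1) = 6 * ((2 : ℚ) ^ h * (3 : ℚ) ^ h) := by
        rw [pow_succ, ← mul_pow]; norm_num; ring
      have p4 : (6 : ℚ) ^ h = (2 : ℚ) ^ h * (3 : ℚ) ^ h := by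
        rw [← mul_pow]; norm_num
      have p5 : (12 : ℚ) ^ h = ((2 : ℚ) ^ h) ^ 2 * (3 : ℚ) ^ h := by
        rw [← pow_mul, mul_comm h 2, pow_mul, ← mul_pow]; norm_num
      have p6 : (16 : ℚ) ^ h = ((2 : ℚ) ^ h) ^ 4 := by
        rw [← pow_mul, mul_comm h 4, pow_mul]; norm_num
      rw [p1, p2, p3, p4, p5, p6]
      -- nonzero facts
      have nz : ∀ n : ℕ, ((n ! : ℕ) : ℚ) ≠ 0 := fun n =>
        Nat.cast_ne_zero.mpr (Nat.factorial_ne_zero n)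
      have za : ((2 : ℚ) ^ h) ≠ 0 := pow_ne_zero _ (by norm_num)
      have zb : ((3 : ℚ) ^ h) ≠ 0 := pow_ne_zero _ (by norm_num)
      have zc : (2 * (h : ℚ) + 1) ≠ 0 := by positivity
      have zd : (2 * (h : ℚ) + 2) ≠ 0 := by positivity
      have ze : ((h : ℚ) + 1) ≠ 0 := by positivity
      push_cast
      field_simp
      ring
  intro h m h1 hm
  obtain ⟨j, rfl⟩ : ∃ j, h = j + 1 := ⟨h - 1, by omega⟩
  have := key (j + 1) m (by omega)
  rw [this]
  have e : 3 * (j + 1) - 2 = 3 * j + 1 := by omega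
  have e2 : 3 * (j + 1) = 3 * j + 3 := by omega
  rw [e, e2]
  have : (2 : ℚ) ^ (3 * j + 1) = 3⁻¹ * (3 * (2:ℚ) ^ (3 * j + 3) / 4) * 3 / 3 := by
    rw [pow_succ, pow_succ, pow_succ]; ring
  rw [show (2 : ℚ) ^ (3 * j + 1) = (2:ℚ) ^ (3 * j + 3) / 4 by
    rw [pow_succ, pow_succ, pow_succ]; ring]
  ring
end

section
/- Define the sequence of rational numbers (c_h) for integers h ≥ 0 by c_0 = 0 and, for h ≥ 1, c_h = (4/(2h−1)) · c_{h−1} + 3/(2^{h−1} · (h−1)! · (2h−1)). Then for every integer h ≥ 0, c_h = 3 · 2^{3h−2} · (h!/(2h)!) · Σ_{l=0}^{h−1} C(2l, l) · 16^{−l}, where C(2l,l) is the central binomial coefficient. (For h = 0 the empty sum makes the right-hand side equal to 0.) -/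
open Nat Finset

/-- The computation in the proof of Corollary 5 of Bernardi–Chapuy: the
constants `c h` defined by `c 0 = 0` and
`c h = (4/(2h-1)) · c (h-1) + 3/(2^(h-1) · (h-1)! · (2h-1))` have the closed
form `c h = 3 · 2^(3h-2) · (h!/(2h)!) · Σ_{l=0}^{h-1} C(2l,l) · 16^(-l)`. -/
theorem closed_form_for_constants_c_h
    (c : ℕ → ℚ)
    (h0 : c 0 = 0)
    (hrec : ∀ h : ℕ, 1 ≤ h →
      c h = (4 / (2 * (h : ℚ) - 1)) * c (h - 1) +
        3 / ((2 : ℚ) ^ (h - 1) * ((h - 1)! : ℚ) * (2 * (h : ℚ) - 1))) :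
    ∀ h : ℕ,
      c h = 3 * (2 : ℚ) ^ (3 * h - 2) * ((h ! : ℚ) / ((2 * h)! : ℚ)) *
        ∑ l ∈ Finset.range h, ((2 * l).choose l : ℚ) / (16 : ℚ) ^ l := by
  intro h
  induction h with
  | zero => simp [h0]
  | succ n ih =>
    have hrec' := hrec (n + 1) (by omega)
    simp only [Nat.add_sub_cancel] at hrec'
    rw [hrec', ih, Finset.sum_range_succ]
    rcases Nat.eq_zero_or_pos n with hn | hn
    · subst hn
      norm_num [h0, Nat.factorial]
    · have e1 : 3 * (n + 1) - 2 = (3 * n - 2) + 3 := by omega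
      rw [e1, pow_add]
      have hch : ((2 * n).choose n : ℚ) * (n ! : ℚ) * (n ! : ℚ) = ((2 * n)! : ℚ) := by
        have h3 := Nat.choose_mul_factorial_mul_factorial (by omega : n ≤ 2 * n)
        have h2 : 2 * n - n = n := by omega
        rw [h2] at h3
        exact_mod_cast h3
      have hf1 : ((n + 1)! : ℚ) = ((n : ℚ) + 1) * (n ! : ℚ) := by
        push_cast [Nat.factorial_succ]; ring
      have hf2 : ((2 * (n + 1))! : ℚ)
          = (2 * (n : ℚ) + 2) * (2 * (n : ℚ) + 1) * ((2 * n)! : ℚ) := by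
        have e2 : 2 * (n + 1) = (2 * n + 1) + 1 := by ring
        rw [e2, Nat.factorial_succ, Nat.factorial_succ]
        push_cast; ring
      have hk : (2 : ℚ) ^ (3 * n - 2) = 2 ^ n * 2 ^ n * 2 ^ n / 4 := by
        rw [eq_div_iff (by norm_num : (4:ℚ) ≠ 0),
          show (4:ℚ) = 2 ^ 2 by norm_num, ← pow_add, ← pow_add, ← pow_add]
        congr 1
        omega
      have h16e : (16 : ℚ) ^ n = (2 : ℚ) ^ n * 2 ^ n * 2 ^ n * 2 ^ n := by
        rw [← mul_pow, ← mul_pow, ← mul_pow]; norm_num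
      have hnf : (n ! : ℚ) ≠ 0 := by exact_mod_cast Nat.factorial_ne_zero n
      have hC : ((2 * n).choose n : ℚ) ≠ 0 := by
        have := Nat.choose_pos (by omega : n ≤ 2 * n)
        positivity
      have hpos : 2 * (n : ℚ) + 1 ≠ 0 := by positivity
      have hpos2 : 2 * (n : ℚ) + 2 ≠ 0 := by positivity
      have h2n : (2 : ℚ) ^ n ≠ 0 := by positivity
      have e : 2 * ((n : ℚ) + 1) - 1 = 2 * (n : ℚ) + 1 := by ring
      push_cast
      rw [hf1, hf2, hk, h16e, ← hch, e]
      field_simp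
      ring
end

section
/- Let k ≥ 1 be an integer, let σ be a fixed-point-free permutation of {1, …, 2k}, and let r ∈ {1, …, 2k}. For an integer x, let ⟨x⟩ denote the unique element of {1, …, 2k} congruent to x modulo 2k. Then Σ_{i=1}^{2k} ( [i < σ(i)] + [⟨r+1−i⟩ < ⟨r+1−σ(i)⟩] ) = 2k, where [P] denotes 1 if P holds and 0 otherwise. -/
open Finset

/-- `bracket k x` is the unique element of `{1, …, 2k}` congruent to `x`
modulo `2k` (for `k ≥ 1`). -/
def bracket (k : ℕ) (x : ℤ) : ℤ := (x - 1).emod (2 * (k : ℤ)) + 1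

lemma bracket_eq_self (k : ℕ) (x : ℤ) (h1 : 1 ≤ x) (h2 : x ≤ 2 * (k : ℤ)) :
    bracket k x = x := by
  show (x - 1) % (2 * (k : ℤ)) + 1 = x
  rw [Int.emod_eq_of_lt (by omega) (by omega)]
  omega

lemma bracket_add (k : ℕ) (x : ℤ) : bracket k (x + 2 * (k : ℤ)) = bracket k x := by
  show (x + 2 * (k : ℤ) - 1) % (2 * (k : ℤ)) + 1 = (x - 1) % (2 * (k : ℤ)) + 1
  have h : x + 2 * (k : ℤ) - 1 = (x - 1) + (2 * (k : ℤ)) * 1 := by ring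
  rw [h, Int.add_mul_emod_self_left]

/-- The key summation in the proof of Proposition 8 of Bernardi–Chapuy: for a
fixed-point-free permutation `σ` of `{1, …, 2k}` and `r ∈ {1, …, 2k}`,
`Σ_{i=1}^{2k} ([i < σ i] + [⟨r+1-i⟩ < ⟨r+1-σ i⟩]) = 2k`, where `⟨x⟩` is the
representative of `x` modulo `2k` in `{1, …, 2k}`. -/
theorem sum_of_twist_indicators
    (k : ℕ) (hk : 1 ≤ k) (σ : ℤ → ℤ)
    (hσ : Set.BijOn σ (Set.Icc 1 (2 * (k : ℤ))) (Set.Icc 1 (2 * (k : ℤ))))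
    (hfix : ∀ i ∈ Set.Icc (1 : ℤ) (2 * (k : ℤ)), σ i ≠ i)
    (r : ℤ) (hr : r ∈ Set.Icc (1 : ℤ) (2 * (k : ℤ))) :
    ∑ i ∈ Finset.Icc (1 : ℤ) (2 * (k : ℤ)),
      ((if i < σ i then (1 : ℤ) else 0) +
       (if bracket k (r + 1 - i) < bracket k (r + 1 - σ i) then (1 : ℤ) else 0)) =
      2 * (k : ℤ) := by
  have hr' : (1 : ℤ) ≤ r ∧ r ≤ 2 * (k : ℤ) := hr
  have hB : ∀ x : ℤ, 1 ≤ x → x ≤ 2 * (k : ℤ) →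
      bracket k (r + 1 - x) = if x ≤ r then r + 1 - x else r + 1 - x + 2 * (k : ℤ) := by
    intro x h1 h2
    by_cases h : x ≤ r
    · simp only [if_pos h]
      exact bracket_eq_self k _ (by omega) (by omega)
    · simp only [if_neg h]
      rw [← bracket_add k (r + 1 - x)]
      exact bracket_eq_self k _ (by omega) (by omega)
  -- pointwise identity
  have key : ∀ i ∈ Finset.Icc (1 : ℤ) (2 * (k : ℤ)),
      ((if i < σ i then (1 : ℤ) else 0) +
       (if bracket k (r + 1 - i) < bracket k (r + 1 - σ i) then (1 : ℤ) else 0)) =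
      1 + (if i ≤ r then (1 : ℤ) else 0) - (if σ i ≤ r then (1 : ℤ) else 0) := by
    intro i hi
    have hi' : (1 : ℤ) ≤ i ∧ i ≤ 2 * (k : ℤ) := Finset.mem_Icc.mp hi
    have hiS : i ∈ Set.Icc (1 : ℤ) (2 * (k : ℤ)) := Set.mem_Icc.mpr hi'
    have hs : σ i ∈ Set.Icc (1 : ℤ) (2 * (k : ℤ)) := hσ.mapsTo hiS
    have hs' : (1 : ℤ) ≤ σ i ∧ σ i ≤ 2 * (k : ℤ) := hs
    have hne : σ i ≠ i := hfix i hiS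
    rw [hB i hi'.1 hi'.2, hB (σ i) hs'.1 hs'.2]
    split_ifs <;> omega
  rw [Finset.sum_congr rfl key]
  have hsplit : ∑ i ∈ Finset.Icc (1 : ℤ) (2 * (k : ℤ)),
      (1 + (if i ≤ r then (1 : ℤ) else 0) - (if σ i ≤ r then (1 : ℤ) else 0)) =
      (∑ _i ∈ Finset.Icc (1 : ℤ) (2 * (k : ℤ)), (1 : ℤ)) +
      (∑ i ∈ Finset.Icc (1 : ℤ) (2 * (k : ℤ)), (if i ≤ r then (1 : ℤ) else 0)) -
      (∑ i ∈ Finset.Icc (1 : ℤ) (2 * (k : ℤ)), (if σ i ≤ r then (1 : ℤ) else 0)) := by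
    rw [← Finset.sum_add_distrib, ← Finset.sum_sub_distrib]
  rw [hsplit]
  have hbij : (∑ i ∈ Finset.Icc (1 : ℤ) (2 * (k : ℤ)), (if σ i ≤ r then (1 : ℤ) else 0)) =
      (∑ i ∈ Finset.Icc (1 : ℤ) (2 * (k : ℤ)), (if i ≤ r then (1 : ℤ) else 0)) := by
    apply Finset.sum_bij (fun a _ => σ a)
    · intro a ha
      have : σ a ∈ Set.Icc (1 : ℤ) (2 * (k : ℤ)) :=
        hσ.mapsTo (Set.mem_Icc.mpr (Finset.mem_Icc.mp ha))
      exact Finset.mem_Icc.mpr this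
    · intro a ha b hb hab
      exact hσ.injOn (Set.mem_Icc.mpr (Finset.mem_Icc.mp ha))
        (Set.mem_Icc.mpr (Finset.mem_Icc.mp hb)) hab
    · intro b hb
      obtain ⟨a, ha, hab⟩ := hσ.surjOn (Set.mem_Icc.mpr (Finset.mem_Icc.mp hb))
      exact ⟨a, Finset.mem_Icc.mpr (Set.mem_Icc.mp ha), hab⟩
    · intro a _
      rfl
  rw [hbij]
  have hcard : (∑ _i ∈ Finset.Icc (1 : ℤ) (2 * (k : ℤ)), (1 : ℤ)) = 2 * (k : ℤ) := by
    rw [Finset.sum_const, Int.card_Icc]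
    simp
  omega
end
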